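/- For all x ≥ 0 and κ > 1, Q(x) ≥ π/((π-1)x + √(x²+2π)) · (1/√(2π)) · e^{-x²/2}, where Q is the Gaussian Q-function. -/

import Mathlib

/-! With `φ t = exp (-t² / 2)` and `g x = π / ((π - 1) x + √(x² + 2π))`, consider the gap
`h x = ∫ t in Ioi x, φ t - g x * φ x`. It vanishes at `0` (both terms equal `√(2π) / 2`) and
tends to `0` at infinity, and `h' = (x g - g' - 1) φ`. Clearing denominators, `x g - g' - 1` has
the sign of `(π - 3) √(x² + 2π) - x`, which is nonnegative up to a threshold and nonpositive
beyond it. So `h` increases and then decreases to `0`, hence stays nonnegative on `[0, ∞)`. -/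

open Real MeasureTheory

noncomputable def Qfun (x : ℝ) : ℝ :=
  (1 / Real.sqrt (2 * Real.pi)) * ∫ t in Set.Ioi x, Real.exp (-(t ^ 2) / 2)

open Set Filter Topology

theorem hasDerivAt_integral_Ioi {E : Type*} [NormedAddCommGroup E] [NormedSpace ℝ E]
    [CompleteSpace E] {f : ℝ → E} {x : ℝ} (hf : Integrable f) (hfx : ContinuousAt f x) :
    HasDerivAt (fun y => ∫ t in Ioi y, f t) (-f x) x := by
  have hsplit : (fun y => ∫ t in Ioi y, f t) = fun y => (∫ t in y..x, f t) + ∫ t in Ioi x, f t :=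
    funext fun y =>
      (intervalIntegral.integral_interval_add_Ioi hf.integrableOn hf.integrableOn).symm
  rw [hsplit]
  exact (intervalIntegral.integral_hasDerivAt_left hf.intervalIntegrable
    hf.aestronglyMeasurable.stronglyMeasurableAtFilter hfx).add_const _

theorem nonneg_of_hasDerivAt_nonneg_of_nonpos {h h' : ℝ → ℝ} {a c x : ℝ}
    (hderiv : ∀ y, a ≤ y → HasDerivAt h (h' y) y)
    (hinc : ∀ y, a ≤ y → y ≤ c → 0 ≤ h' y) (hdec : ∀ y, a ≤ y → c ≤ y → h' y ≤ 0)
    (ha : 0 ≤ h a) (hlim : Tendsto h atTop (𝓝 0)) (hx : a ≤ x) : 0 ≤ h x := by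
  rcases le_total x c with hxc | hcx
  · have hmono : MonotoneOn h (Icc a x) := by
      refine monotoneOn_of_hasDerivWithinAt_nonneg (f' := h') (convex_Icc a x)
        (fun y hy => (hderiv y hy.1).continuousAt.continuousWithinAt)
        (fun y hy => ?_) (fun y hy => ?_) <;> rw [interior_Icc] at hy
      · exact (hderiv y hy.1.le).hasDerivWithinAt
      · exact hinc y hy.1.le (hy.2.le.trans hxc)
    exact ha.trans (hmono (left_mem_Icc.mpr hx) (right_mem_Icc.mpr hx) hx)
  · have hanti : AntitoneOn h (Ici x) := by
      refine antitoneOn_of_hasDerivWithinAt_nonpos (f' := h') (convex_Ici x)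
        (fun y hy => (hderiv y (hx.trans hy)).continuousAt.continuousWithinAt)
        (fun y hy => ?_) (fun y hy => ?_) <;> rw [interior_Ici] at hy
      · exact (hderiv y (hx.trans hy.le)).hasDerivWithinAt
      · exact hdec y (hx.trans hy.le) (hcx.trans hy.le)
    refine le_of_tendsto hlim ?_
    filter_upwards [eventually_ge_atTop x] with y hy
    exact hanti self_mem_Ici hy hy

noncomputable def gaussTail (x : ℝ) : ℝ := ∫ t in Ioi x, exp (-(t ^ 2) / 2)

theorem integrable_exp_neg_sq_div_two : Integrable fun t : ℝ => exp (-(t ^ 2) / 2) := by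
  simpa [neg_div, div_eq_inv_mul] using integrable_exp_neg_mul_sq (b := 1 / 2) (by norm_num)

theorem hasDerivAt_exp_neg_sq_div_two (x : ℝ) :
    HasDerivAt (fun t => exp (-(t ^ 2) / 2)) (-x * exp (-(x ^ 2) / 2)) x := by
  have hexponent : HasDerivAt (fun t : ℝ => -(t ^ 2) / 2) (-x) x := by
    simpa [neg_div] using ((hasDerivAt_pow 2 x).neg).div_const 2
  convert hexponent.exp using 1
  ring

theorem tendsto_exp_neg_sq_div_two_atTop :
    Tendsto (fun t : ℝ => exp (-(t ^ 2) / 2)) atTop (𝓝 0) :=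
  tendsto_exp_atBot.comp <|
    (tendsto_neg_atTop_atBot.comp (tendsto_pow_atTop two_ne_zero)).atBot_div_const two_pos

theorem hasDerivAt_gaussTail (x : ℝ) : HasDerivAt gaussTail (-exp (-(x ^ 2) / 2)) x :=
  hasDerivAt_integral_Ioi integrable_exp_neg_sq_div_two (by fun_prop)

theorem gaussTail_zero : gaussTail 0 = √(2 * π) / 2 := by
  have := integral_gaussian_Ioi (1 / 2)
  rw [show π / (1 / 2) = 2 * π by ring] at this
  simpa [gaussTail, neg_div, div_eq_inv_mul] using this

theorem tendsto_gaussTail_atTop : Tendsto gaussTail atTop (𝓝 0) :=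
  tendsto_integral_Ioi_zero tendsto_id

theorem hasDerivAt_gaussTail_sub_mul {g : ℝ → ℝ} {g' x : ℝ} (hg : HasDerivAt g g' x) :
    HasDerivAt (fun y => gaussTail y - g y * exp (-(y ^ 2) / 2))
      ((x * g x - g' - 1) * exp (-(x ^ 2) / 2)) x :=
  ((hasDerivAt_gaussTail x).sub (hg.mul (hasDerivAt_exp_neg_sq_div_two x))).congr_deriv (by ring)

noncomputable def boydDenom (x : ℝ) : ℝ := (π - 1) * x + √(x ^ 2 + 2 * π)

noncomputable def boydRatio (x : ℝ) : ℝ := π / boydDenom x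

noncomputable def boydRatioDeriv (x : ℝ) : ℝ :=
  -(π * (π - 1 + x / √(x ^ 2 + 2 * π))) / boydDenom x ^ 2

-- Mills' ratio `R` solves `R' = x R - 1`; this is the defect of `boydRatio` in that equation.
noncomputable def boydDefect (x : ℝ) : ℝ := x * boydRatio x - boydRatioDeriv x - 1

-- The zero of `(π - 3) √(x² + 2π) - x` on `[0, ∞)`.
noncomputable def boydThreshold : ℝ := (π - 3) * √(2 * π / (1 - (π - 3) ^ 2))

theorem sqrt_sq_add_two_pi_pos (x : ℝ) : 0 < √(x ^ 2 + 2 * π) := by positivity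

theorem boydDenom_pos {x : ℝ} (hx : 0 ≤ x) : 0 < boydDenom x := by
  have : 0 < π - 1 := by linarith [pi_gt_three]
  exact add_pos_of_nonneg_of_pos (by positivity) (sqrt_sq_add_two_pi_pos x)

theorem hasDerivAt_boydDenom (x : ℝ) :
    HasDerivAt boydDenom (π - 1 + x / √(x ^ 2 + 2 * π)) x := by
  have hsq : HasDerivAt (fun y : ℝ => y ^ 2 + 2 * π) (2 * x) x := by
    simpa using (hasDerivAt_pow 2 x).add_const (2 * π)
  refine ((hasDerivAt_id x).const_mul (π - 1)).add (hsq.sqrt (by positivity)) |>.congr_deriv ?_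
  field_simp

theorem hasDerivAt_boydRatio {x : ℝ} (hx : 0 ≤ x) :
    HasDerivAt boydRatio (boydRatioDeriv x) x := by
  refine ((hasDerivAt_const x π).div (hasDerivAt_boydDenom x) (boydDenom_pos hx).ne').congr_deriv ?_
  simp [boydRatioDeriv]

theorem boydRatio_zero : boydRatio 0 = √(2 * π) / 2 := by
  have hsq : √(2 * π) ^ 2 = 2 * π := sq_sqrt (by positivity)
  have hD : boydDenom 0 = √(2 * π) := by simp [boydDenom]
  rw [boydRatio, hD, div_eq_div_iff (by positivity) two_ne_zero]
  linarith

theorem tendsto_boydRatio_atTop : Tendsto boydRatio atTop (𝓝 0) := by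
  refine tendsto_const_nhds.div_atTop (tendsto_atTop_mono (fun x => ?_)
    (tendsto_id.const_mul_atTop (by linarith [pi_gt_three] : (0 : ℝ) < π - 1)))
  simp only [boydDenom, id]
  linarith [sqrt_sq_add_two_pi_pos x]

theorem one_sub_pi_sub_three_sq_pos : 0 < 1 - (π - 3) ^ 2 := by
  nlinarith [pi_gt_three, pi_lt_four]

theorem boydThreshold_sq : boydThreshold ^ 2 * (1 - (π - 3) ^ 2) = 2 * π * (π - 3) ^ 2 := by
  have := one_sub_pi_sub_three_sq_pos
  rw [boydThreshold, mul_pow, sq_sqrt (by positivity)]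
  field_simp

theorem boydDefect_mul_eq {x : ℝ} (hx : 0 ≤ x) :
    boydDefect x *
      (boydDenom x ^ 2 * √(x ^ 2 + 2 * π) * (x + √(x ^ 2 + 2 * π)) ^ 2) =
    2 * π ^ 2 * ((π - 3) * √(x ^ 2 + 2 * π) - x) := by
  have hD := (boydDenom_pos hx).ne'
  have hS := (sqrt_sq_add_two_pi_pos x).ne'
  have hS2 : √(x ^ 2 + 2 * π) ^ 2 = x ^ 2 + 2 * π := sq_sqrt (by positivity)
  simp only [boydDefect, boydRatio, boydRatioDeriv, boydDenom] at hD ⊢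
  generalize √(x ^ 2 + 2 * π) = S at *
  have hD' : x * (π - 1) + S ≠ 0 := by rwa [mul_comm]
  have hcommon :
      x * (π / ((π - 1) * x + S)) - -(π * (π - 1 + x / S)) / ((π - 1) * x + S) ^ 2 - 1 =
      (π * x * ((π - 1) * x + S) * S + π * ((π - 1) * S + x) - ((π - 1) * x + S) ^ 2 * S) /
        (((π - 1) * x + S) ^ 2 * S) := by
    field_simp
    ring
  rw [hcommon, div_mul_eq_mul_div, div_eq_iff (by positivity)]
  -- The coefficient is the quotient of the difference of both sides by `S² - (x² + 2π)`.
  linear_combination ((-3) * S * π + S * π ^ 2 - S ^ 3 - x * π - x * S ^ 2 * π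
      + x ^ 2 * S - x ^ 2 * S * π) * (((π - 1) * x + S) ^ 2 * S) * hS2

theorem pi_sub_three_mul_sqrt_sq_sub_sq (x : ℝ) :
    ((π - 3) * √(x ^ 2 + 2 * π)) ^ 2 - x ^ 2 = (1 - (π - 3) ^ 2) * (boydThreshold ^ 2 - x ^ 2) := by
  rw [mul_pow, sq_sqrt (by positivity)]
  linear_combination -boydThreshold_sq

theorem le_mul_sqrt_of_le_boydThreshold {x : ℝ} (hx : 0 ≤ x) (hxc : x ≤ boydThreshold) :
    x ≤ (π - 3) * √(x ^ 2 + 2 * π) := by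
  have hk := one_sub_pi_sub_three_sq_pos
  have hS : 0 ≤ (π - 3) * √(x ^ 2 + 2 * π) := mul_nonneg (by linarith [pi_gt_three]) (sqrt_nonneg _)
  refine (pow_le_pow_iff_left₀ hx hS two_ne_zero).mp ?_
  nlinarith [pi_sub_three_mul_sqrt_sq_sub_sq x, pow_le_pow_left₀ hx hxc 2]

theorem mul_sqrt_le_of_boydThreshold_le {x : ℝ} (hx : 0 ≤ x) (hcx : boydThreshold ≤ x) :
    (π - 3) * √(x ^ 2 + 2 * π) ≤ x := by
  have hk := one_sub_pi_sub_three_sq_pos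
  have hc : 0 ≤ boydThreshold := mul_nonneg (by linarith [pi_gt_three]) (sqrt_nonneg _)
  have hS : 0 ≤ (π - 3) * √(x ^ 2 + 2 * π) := mul_nonneg (by linarith [pi_gt_three]) (sqrt_nonneg _)
  refine (pow_le_pow_iff_left₀ hS hx two_ne_zero).mp ?_
  nlinarith [pi_sub_three_mul_sqrt_sq_sub_sq x, pow_le_pow_left₀ hc hcx 2]

theorem boydDenom_sq_mul_sqrt_mul_sq_pos {x : ℝ} (hx : 0 ≤ x) :
    0 < boydDenom x ^ 2 * √(x ^ 2 + 2 * π) * (x + √(x ^ 2 + 2 * π)) ^ 2 := by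
  have := boydDenom_pos hx
  have := sqrt_sq_add_two_pi_pos x
  positivity

theorem boydDefect_nonneg {x : ℝ} (hx : 0 ≤ x) (hxc : x ≤ boydThreshold) :
    0 ≤ boydDefect x := by
  refine nonneg_of_mul_nonneg_left ?_ (boydDenom_sq_mul_sqrt_mul_sq_pos hx)
  rw [boydDefect_mul_eq hx]
  have := le_mul_sqrt_of_le_boydThreshold hx hxc
  have := pi_pos
  nlinarith

theorem boydDefect_nonpos {x : ℝ} (hx : 0 ≤ x) (hcx : boydThreshold ≤ x) :
    boydDefect x ≤ 0 := by
  refine nonpos_of_mul_nonpos_left ?_ (boydDenom_sq_mul_sqrt_mul_sq_pos hx)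
  rw [boydDefect_mul_eq hx]
  have := mul_sqrt_le_of_boydThreshold_le hx hcx
  have := pi_pos
  nlinarith

theorem stmt16_general (x : ℝ) (hx : 0 ≤ x) :
    Qfun x ≥ Real.pi / ((Real.pi - 1) * x + Real.sqrt (x ^ 2 + 2 * Real.pi)) *
      (1 / Real.sqrt (2 * Real.pi)) * Real.exp (-(x ^ 2) / 2) := by
  have hlim : Tendsto (fun y => gaussTail y - boydRatio y * exp (-(y ^ 2) / 2)) atTop (𝓝 0) := by
    simpa using
      tendsto_gaussTail_atTop.sub (tendsto_boydRatio_atTop.mul tendsto_exp_neg_sq_div_two_atTop)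
  have hmills : 0 ≤ gaussTail x - boydRatio x * exp (-(x ^ 2) / 2) :=
    nonneg_of_hasDerivAt_nonneg_of_nonpos
      (h := fun y => gaussTail y - boydRatio y * exp (-(y ^ 2) / 2)) (c := boydThreshold)
      (fun y hy => hasDerivAt_gaussTail_sub_mul (hasDerivAt_boydRatio hy))
      (fun y hy hyc => mul_nonneg (boydDefect_nonneg hy hyc) (exp_pos _).le)
      (fun y hy hcy => mul_nonpos_of_nonpos_of_nonneg (boydDefect_nonpos hy hcy) (exp_pos _).le)
      (by simp [gaussTail_zero, boydRatio_zero]) hlim hx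
  have hscale := mul_le_mul_of_nonneg_left (sub_nonneg.mp hmills)
    (by positivity : (0 : ℝ) ≤ 1 / √(2 * π))
  rw [ge_iff_le, Qfun]
  simp only [gaussTail, boydRatio, boydDenom] at hscale
  linarith

theorem stmt16 (x κ : ℝ) (hx : 0 ≤ x) (hκ : 1 < κ) :
    Qfun x ≥ Real.pi / ((Real.pi - 1) * x + Real.sqrt (x ^ 2 + 2 * Real.pi)) *
      (1 / Real.sqrt (2 * Real.pi)) * Real.exp (-(x ^ 2) / 2) :=
  stmt16_general x hx
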